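/- arXiv:1705.05606 — 5 statements merged into one kernel-verified Lean document; each statement's English description precedes it below -/
import Mathlib

section
/- An alternating data automaton A has empty language if and only if A admits a safety invariant, i.e., a function I from Boolean state valuations to sets of data valuations such that (1) for every event sequence u and every valuation (β,ν) satisfying Post_A(ι,u) we have ν ∈ I(β), and (2) for every β, ν with ν ∈ I(β) and every u, (β,ν) does not satisfy Accept_A(u). -/
/-- Positive Boolean formulas over variables `V` (occurring only positively)
and atoms `A` (which may occur negated, via `natom`). -/
inductive BForm (V A : Type) : Type
  | tru : BForm V A
  | fls : BForm V A
  | var (v : V) : BForm V A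
  | atom (a : A) : BForm V A
  | natom (a : A) : BForm V A
  | and (f g : BForm V A) : BForm V A
  | or (f g : BForm V A) : BForm V A

namespace BForm

variable {V A B W : Type}

/-- Satisfaction of a formula under a valuation `β` of the variables and `ι` of the atoms. -/
def Eval (β : V → Prop) (ι : A → Prop) : BForm V A → Prop
  | tru => True
  | fls => False
  | var v => β v
  | atom a => ι a
  | natom a => ¬ ι a
  | and f g => Eval β ι f ∧ Eval β ι g
  | or f g => Eval β ι f ∨ Eval β ι g

/-- The dual formula: swap `∧`/`∨`, fix variables, negate atoms. -/
def dual : BForm V A → BForm V A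
  | tru => fls
  | fls => tru
  | var v => var v
  | atom a => natom a
  | natom a => atom a
  | and f g => or (dual f) (dual g)
  | or f g => and (dual f) (dual g)

/-- Number of symbols of a formula. -/
def size : BForm V A → Nat
  | tru => 1
  | fls => 1
  | var _ => 1
  | atom _ => 1
  | natom _ => 1 + 1
  | and f g => size f + size g + 1
  | or f g => size f + size g + 1

/-- Simultaneous substitution of the variables by formulas. -/
def subst (Δ : V → BForm V A) : BForm V A → BForm V A
  | tru => tru
  | fls => fls
  | var v => Δ v
  | atom a => atom a
  | natom a => natom a
  | and f g => and (subst Δ f) (subst Δ g)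
  | or f g => or (subst Δ f) (subst Δ g)

/-- Renaming of variables. -/
def rename (h : V → W) : BForm V A → BForm W A
  | tru => tru
  | fls => fls
  | var v => var (h v)
  | atom a => atom a
  | natom a => natom a
  | and f g => and (rename h f) (rename h g)
  | or f g => or (rename h f) (rename h g)

/-- Renaming of atoms. -/
def mapAtom (h : A → B) : BForm V A → BForm V B
  | tru => tru
  | fls => fls
  | var v => var v
  | atom a => atom (h a)
  | natom a => natom (h a)
  | and f g => and (mapAtom h f) (mapAtom h g)
  | or f g => or (mapAtom h f) (mapAtom h g)

end BForm
/-- An alternating data automaton over states `Q`, input events `E`, data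
variables `X` and data domain `D`.  A transition formula is a positive Boolean
formula over the states whose atoms are constraints relating the previous
(`x̄`) and current (`x`) data valuations. -/
structure ADA (Q E X D : Type) where
  /-- the initial configuration `ι ∈ Form⁺(Q, ∅)` -/
  init : BForm Q Empty
  /-- the final states -/
  final : Q → Prop
  /-- the transition function `Δ` -/
  tr : Q → E → BForm Q ((X → D) → (X → D) → Prop)

namespace ADA

variable {Q Q₁ Q₂ E X D : Type}

/-- Top-down acceptance semantics: `Sem M w prev q` holds iff the automaton,
started in state `q` with previous data valuation `prev`, accepts the rest of
the data word `w`. -/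
def Sem (M : ADA Q E X D) : List (E × (X → D)) → (X → D) → Q → Prop
  | [], _, q => M.final q
  | (a, ν) :: w, prev, q =>
      BForm.Eval (fun q' => Sem M w ν q') (fun p => p prev ν) (M.tr q a)

/-- The language of an ADA: the initial data values are unconstrained. -/
def lang (M : ADA Q E X D) : Set (List (E × (X → D))) :=
  { w | ∃ ν₀ : X → D, BForm.Eval (fun q => Sem M w ν₀ q) Empty.elim M.init }

/-- The union automaton: disjoint union of states, disjunction of initial
configurations, union of final states and of transition functions. -/
def union (M₁ : ADA Q₁ E X D) (M₂ : ADA Q₂ E X D) : ADA (Q₁ ⊕ Q₂) E X D where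
  init := .or (M₁.init.rename Sum.inl) (M₂.init.rename Sum.inr)
  final := Sum.elim M₁.final M₂.final
  tr := fun q a =>
    match q with
    | .inl q => (M₁.tr q a).rename Sum.inl
    | .inr q => (M₂.tr q a).rename Sum.inr

/-- The intersection automaton: disjoint union of states, conjunction of
initial configurations, union of final states and of transition functions. -/
def inter (M₁ : ADA Q₁ E X D) (M₂ : ADA Q₂ E X D) : ADA (Q₁ ⊕ Q₂) E X D where
  init := .and (M₁.init.rename Sum.inl) (M₂.init.rename Sum.inr)
  final := Sum.elim M₁.final M₂.final
  tr := fun q a =>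
    match q with
    | .inl q => (M₁.tr q a).rename Sum.inl
    | .inr q => (M₂.tr q a).rename Sum.inr

/-- The complement automaton: dual initial configuration, complemented final
states, dual transition formulas. -/
def compl (M : ADA Q E X D) : ADA Q E X D where
  init := M.init.dual
  final := fun q => ¬ M.final q
  tr := fun q a => (M.tr q a).dual

end ADA
namespace ADA

variable {Q E X D : Type}

/-- Semantic configurations: sets of pairs of a Boolean valuation of the states
and a data valuation. -/
abbrev Conf (Q X D : Type) := (Q → Prop) → (X → D) → Prop

/-- The one-step post-image `Post_M(φ, a) = ∃x̄. Δ(φ[x̄/x], a)`: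
each state `q` of `φ` is replaced by `Δ(q,a)` and the previous data values are
projected out existentially. -/
def post (M : ADA Q E X D) (C : Conf Q X D) (a : E) : Conf Q X D :=
  fun β ν => ∃ νp : X → D,
    C (fun q => BForm.Eval β (fun p => p νp ν) (M.tr q a)) νp

/-- The post-image along a finite sequence of input events:
`Post_M(φ, ε) = φ` and `Post_M(φ, u·a) = Post_M(Post_M(φ, u), a)`. -/
def postSeq (M : ADA Q E X D) (C : Conf Q X D) (u : List E) : Conf Q X D :=
  u.foldl (post M) C

/-- The semantic configuration of the initial formula `ι` (no data constraints). -/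
def initConf (M : ADA Q E X D) : Conf Q X D :=
  fun β _ => BForm.Eval β Empty.elim M.init

/-- `Accept_M(u) = Post_M(ι,u) ∧ ⋀_{q ∈ Q∖F} (q → ⊥)`. -/
def AcceptF (M : ADA Q E X D) (u : List E) (β : Q → Prop) (ν : X → D) : Prop :=
  postSeq M (initConf M) u β ν ∧ ∀ q : Q, ¬ M.final q → ¬ β q

end ADA

/-!
A valuation `(β, ν)` satisfies `Post_M(ι, u)` exactly when some data word over `u`, ending in
the data valuation `ν`, has a run from `ι` whose states at the end of the word satisfy `β`
(`postSeq_iff`).  Under `Accept_M(u)` the valuation `β` only holds at final states, so by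
monotonicity of positive formulas the word is accepted; conversely an accepted word yields
`Accept_M(u)` with `β` the final states.  Hence `L(M) = ∅` iff every `Accept_M(u)` is
unsatisfiable, and the valuations reachable by post-images form a safety invariant.
-/

theorem BForm.eval_mono {V A : Type} {β β' : V → Prop} {ι : A → Prop} (h : ∀ v, β v → β' v)
    {f : BForm V A} : f.Eval β ι → f.Eval β' ι := by
  induction f with
  | var v => exact h v
  | and f g ihf ihg => exact And.imp ihf ihg
  | or f g ihf ihg => exact Or.imp ihf ihg
  | _ => exact id

namespace ADA

variable {Q E X D : Type} (M : ADA Q E X D)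

/-- `Sem` with the final states replaced by an arbitrary valuation `β` of the states
reached at the end of the word. -/
def SemWith (β : Q → Prop) : List (E × (X → D)) → (X → D) → Q → Prop
  | [], _, q => β q
  | (a, ν) :: w, prev, q =>
      BForm.Eval (fun q' => SemWith β w ν q') (fun p => p prev ν) (M.tr q a)

theorem sem_eq_semWith_final : M.Sem = M.SemWith M.final := by
  funext w
  induction w with
  | nil => rfl
  | cons p w ih =>
    obtain ⟨a, ν⟩ := p
    funext prev q
    simp only [Sem, SemWith, ih]

variable {M} in
theorem semWith_mono {β β' : Q → Prop} (h : ∀ q, β q → β' q) :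
    ∀ {w : List (E × (X → D))} {prev : X → D} {q : Q},
      M.SemWith β w prev q → M.SemWith β' w prev q
  | [], _, q => h q
  | (_, _) :: _, _, _ => BForm.eval_mono fun _ => semWith_mono h

theorem postSeq_iff {C : Conf Q X D} {u : List E} {β : Q → Prop} {ν : X → D} :
    M.postSeq C u β ν ↔ ∃ (w : List (E × (X → D))) (ν₀ : X → D),
      w.map Prod.fst = u ∧ (w.map Prod.snd).getLastD ν₀ = ν ∧ C (M.SemWith β w ν₀) ν₀ := by
  induction u generalizing C with
  | nil =>
    constructor
    · exact fun h => ⟨[], ν, rfl, rfl, h⟩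
    · rintro ⟨w, ν₀, hu, rfl, hC⟩
      obtain rfl : w = [] := List.map_eq_nil_iff.mp hu
      exact hC
  | cons a u ih =>
    change M.postSeq (M.post C a) u β ν ↔ _
    rw [ih]
    constructor
    · rintro ⟨w, ν₁, rfl, hlast, ν₀, hC⟩
      exact ⟨(a, ν₁) :: w, ν₀, rfl, by rwa [List.map_cons, List.getLastD_cons], hC⟩
    · rintro ⟨_ | ⟨⟨a', ν₁⟩, w⟩, ν₀, hu, hlast, hC⟩
      · cases hu
      · obtain ⟨rfl, rfl⟩ := List.cons.inj hu
        rw [List.map_cons, List.getLastD_cons] at hlast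
        exact ⟨w, ν₁, rfl, hlast, ν₀, hC⟩

theorem exists_acceptF_of_mem_lang {w : List (E × (X → D))} (hw : w ∈ M.lang) :
    ∃ ν, M.AcceptF (w.map Prod.fst) M.final ν := by
  obtain ⟨ν₀, hw⟩ := hw
  refine ⟨(w.map Prod.snd).getLastD ν₀, M.postSeq_iff.2 ⟨w, ν₀, rfl, rfl, ?_⟩, fun _ h => h⟩
  rwa [sem_eq_semWith_final] at hw

theorem lang_nonempty_of_acceptF {u : List E} {β : Q → Prop} {ν : X → D}
    (h : M.AcceptF u β ν) : M.lang.Nonempty := by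
  obtain ⟨hpost, hfinal⟩ := h
  obtain ⟨w, ν₀, -, -, hinit⟩ := M.postSeq_iff.1 hpost
  have hβ : ∀ q, β q → M.final q := fun q hq => by_contra fun hq' => hfinal q hq' hq
  refine ⟨w, ν₀, ?_⟩
  rw [sem_eq_semWith_final]
  exact BForm.eval_mono (fun _ => semWith_mono hβ) hinit

theorem lang_nonempty_iff_exists_acceptF :
    M.lang.Nonempty ↔ ∃ (u : List E) (β : Q → Prop) (ν : X → D), M.AcceptF u β ν :=
  ⟨fun ⟨_, hw⟩ => let ⟨ν, h⟩ := M.exists_acceptF_of_mem_lang hw; ⟨_, _, ν, h⟩,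
    fun ⟨_, _, _, h⟩ => M.lang_nonempty_of_acceptF h⟩

end ADA

/-- An alternating data automaton has empty language iff it
admits a safety invariant: a map `I` from Boolean state valuations to sets of
data valuations such that (1) every valuation satisfying some post-image
`Post_M(ι, u)` belongs to the invariant, and (2) no valuation in the invariant
satisfies any acceptance condition `Accept_M(u)`. -/
theorem lang_empty_iff_safety_invariant {Q E X D : Type} (M : ADA Q E X D) :
    ADA.lang M = ∅ ↔
      ∃ I : (Q → Prop) → Set (X → D),
        (∀ (u : List E) (β : Q → Prop) (ν : X → D),
          ADA.postSeq M (ADA.initConf M) u β ν → ν ∈ I β) ∧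
        (∀ (β : Q → Prop) (ν : X → D), ν ∈ I β →
          ∀ u : List E, ¬ ADA.AcceptF M u β ν) := by
  rw [← Set.not_nonempty_iff_eq_empty, M.lang_nonempty_iff_exists_acceptF]
  constructor
  · intro hempty
    refine ⟨fun β => {ν | ∃ u, M.postSeq M.initConf u β ν}, fun u _ _ h => ⟨u, h⟩, ?_⟩
    exact fun β ν _ u hacc => hempty ⟨u, β, ν, hacc⟩
  · rintro ⟨I, hreach, hsafe⟩ ⟨u, β, ν, hacc⟩
    exact hsafe β ν (hreach u β ν hacc.1) u hacc
end

section
/- Interpolant-based progress: if Accept_A(u) is unsatisfiable for u = a₁...a_n and (⊤, I₀, ..., I_n, ⊥) is an interpolant for the time-stamped problem Θ(u) with each I_i a positive formula over Q and x, and if the predicate set Π contains {I₀,...,I_n}, then the abstract acceptance formula Accept^Π_A(u), computed with abstract post-images α_Π, is unsatisfiable. -/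
namespace ADA

variable {Q E X D : Type}

/-- The abstraction `α_Π(φ) = ⋀{π ∈ Π | φ ⊨ π}` of a configuration w.r.t. a
set `Π` of predicates. -/
def alpha (P : Set (Conf Q X D)) (C : Conf Q X D) : Conf Q X D :=
  fun β ν => ∀ π ∈ P, (∀ β' ν', C β' ν' → π β' ν') → π β ν

/-- The abstract post-image: `Post^Π_M(φ, ε) = φ` and
`Post^Π_M(φ, u·a) = α_Π(Post_M(Post^Π_M(φ,u), a))`. -/
def apostSeq (M : ADA Q E X D) (P : Set (Conf Q X D)) (C : Conf Q X D)
    (u : List E) : Conf Q X D :=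
  u.foldl (fun C a => alpha P (post M C a)) C

/-- The abstract acceptance condition
`Accept^Π_M(u) = Post^Π_M(ι,u) ∧ ⋀_{q ∈ Q∖F} (q → ⊥)`. -/
def AAcceptF (M : ADA Q E X D) (P : Set (Conf Q X D)) (u : List E)
    (β : Q → Prop) (ν : X → D) : Prop :=
  apostSeq M P (initConf M) u β ν ∧ ∀ q : Q, ¬ M.final q → ¬ β q

end ADA

/-- Interpolant-based progress: if `Accept_M(u)` is
unsatisfiable for `u = a₁…a_n` and `(⊤, I₀, …, I_n, ⊥)` is an interpolant for
the time-stamped problem `Θ(u)` whose components are positive in the state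
variables (modelled by monotonicity in the Boolean valuation), and the
predicate set `Π` contains `{I₀,…,I_n}`, then the abstract acceptance formula
`Accept^Π_M(u)` is unsatisfiable. -/
theorem abstract_accept_unsat_of_interpolant {Q E X D : Type}
    (M : ADA Q E X D) (P : Set (ADA.Conf Q X D)) (u : List E)
    (I : ℕ → ADA.Conf Q X D)
    (haccept : ∀ (β : Q → Prop) (ν : X → D), ¬ ADA.AcceptF M u β ν)
    (hpos : ∀ i ≤ u.length, ∀ (β β' : Q → Prop) (ν : X → D),
      (∀ q, β q → β' q) → I i β ν → I i β' ν)
    (h0 : ∀ (β : Q → Prop) (ν : X → D),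
      BForm.Eval β Empty.elim M.init → I 0 β ν)
    (hstep : ∀ (k : ℕ) (hk : k < u.length), ∀ (β β' : Q → Prop) (νp ν : X → D),
      I k β νp →
      (∀ q : Q, β q →
        BForm.Eval β' (fun p => p νp ν) (M.tr q (u.get ⟨k, hk⟩))) →
      I (k + 1) β' ν)
    (hlast : ∀ (β : Q → Prop) (ν : X → D), I u.length β ν →
      (∀ q : Q, ¬ M.final q → ¬ β q) → False)
    (hin : ∀ i ≤ u.length, I i ∈ P) :
    ∀ (β : Q → Prop) (ν : X → D), ¬ ADA.AAcceptF M P u β ν := by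
  have key : ∀ (v : List E) (k : ℕ) (C : ADA.Conf Q X D),
      ∀ (hlen : k + v.length ≤ u.length),
      (∀ (j : ℕ) (hj : j < v.length),
        v.get ⟨j, hj⟩ = u.get ⟨k + j, by omega⟩) →
      (∀ β ν, C β ν → I k β ν) →
      ∀ β ν, (v.foldl (fun C a => ADA.alpha P (ADA.post M C a)) C) β ν →
        I (k + v.length) β ν := by
    intro v
    induction v with
    | nil => intro k C _ _ hC β ν h; simpa using hC β ν h
    | cons a v' ih =>
      intro k C hlen hget hC β ν h
      have hk : k < u.length := by simp at hlen; omega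
      have ha : a = u.get ⟨k, hk⟩ := by
        have := hget 0 (by simp); simpa using this
      have hC' : ∀ β ν, ADA.alpha P (ADA.post M C a) β ν → I (k+1) β ν := by
        intro β ν hα
        refine hα (I (k+1)) (hin (k+1) (by omega)) ?_
        rintro β' ν' ⟨νp, hνp⟩
        have hIk := hC _ _ hνp
        refine hstep k hk _ β' νp ν' hIk ?_
        intro q hq
        rw [← ha]
        exact hq
      have := ih (k+1) (ADA.alpha P (ADA.post M C a))
        (by simp at hlen ⊢; omega)
        (by intro j hj
            have := hget (j+1) (by simpa using Nat.succ_lt_succ hj)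
            simpa [Nat.add_assoc, Nat.add_comm 1 j] using this)
        hC' β ν (by simpa using h)
      simpa [Nat.add_assoc, Nat.add_comm 1 v'.length] using this
  intro β ν ⟨hpost, hfin⟩
  have hI : I u.length β ν := by
    have := key u 0 (ADA.initConf M) (by simp) (by intro j hj; simp)
      (fun β ν h => h0 β ν h) β ν hpost
    simpa using this
  exact hlast β ν hI hfin
end

section
/- Termination of abstract reachability up to equivalence: for any finite predicate set Π and any enumeration μ : ℕ → Σ* of all finite event sequences, there exists k ≥ 0 such that for every u ∈ Σ* there exists i ∈ [0,k] with Post^Π_A(ι,u) equivalent to Post^Π_A(ι,μ(i)); consequently ⋁_{i=0}^{k} Post^Π_A(ι,μ(i)) defines an invariant of A (it is entailed by Post_A(ι,u) for every u). -/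
namespace ADAaux

open ADA

variable {Q E X D : Type}

lemma apostSeq_concat (M : ADA Q E X D) (P : Set (Conf Q X D)) (C : Conf Q X D)
    (l : List E) (a : E) :
    apostSeq M P C (l ++ [a]) = alpha P (post M (apostSeq M P C l) a) := by
  simp [apostSeq, List.foldl_append]

lemma alpha_self (P : Set (Conf Q X D)) (C : Conf Q X D) {β ν} (h : C β ν) :
    alpha P C β ν := fun _ _ hπ => hπ β ν h

lemma alpha_iff (P : Set (Conf Q X D)) (C : Conf Q X D) (β : Q → Prop) (ν : X → D) :
    alpha P C β ν ↔ ∀ π ∈ P, (∀ β' ν', alpha P C β' ν' → π β' ν') → π β ν := by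
  constructor
  · intro h π hπ hent; exact hent β ν h
  · intro h π hπ hent
    exact h π hπ (fun β' ν' h' => h' π hπ hent)

lemma apostSeq_iff (M : ADA Q E X D) (P : Set (Conf Q X D)) (u : List E) (hu : u ≠ [])
    (β : Q → Prop) (ν : X → D) :
    apostSeq M P (initConf M) u β ν ↔
      ∀ π ∈ P, (∀ β' ν', apostSeq M P (initConf M) u β' ν' → π β' ν') → π β ν := by
  rcases List.eq_nil_or_concat u with h | ⟨l, a, rfl⟩
  · exact absurd h hu
  · rw [List.concat_eq_append, apostSeq_concat]
    exact alpha_iff P _ β ν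

lemma apost_equiv (M : ADA Q E X D) (P : Set (Conf Q X D)) (u v : List E)
    (hu : u ≠ []) (hv : v ≠ [])
    (hS : ∀ π ∈ P, (∀ β ν, apostSeq M P (initConf M) u β ν → π β ν) ↔
                   (∀ β ν, apostSeq M P (initConf M) v β ν → π β ν)) :
    ∀ β ν, apostSeq M P (initConf M) u β ν ↔ apostSeq M P (initConf M) v β ν := by
  intro β ν
  rw [apostSeq_iff M P u hu, apostSeq_iff M P v hv]
  constructor <;> intro h π hπ hent
  · exact h π hπ ((hS π hπ).2 hent)
  · exact h π hπ ((hS π hπ).1 hent)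

lemma post_mono (M : ADA Q E X D) (C D' : Conf Q X D)
    (h : ∀ β ν, C β ν → D' β ν) (a : E) :
    ∀ β ν, post M C a β ν → post M D' a β ν := by
  rintro β ν ⟨νp, hc⟩
  exact ⟨νp, h _ _ hc⟩

lemma sound (M : ADA Q E X D) (P : Set (Conf Q X D)) :
    ∀ (u : List E) (C D' : Conf Q X D),
    (∀ β ν, C β ν → D' β ν) → ∀ β ν, postSeq M C u β ν → apostSeq M P D' u β ν := by
  intro u
  induction u with
  | nil => intro C D' h β ν hc; exact h β ν hc
  | cons a u ih =>
    intro C D' h β ν hp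
    exact ih (post M C a) (alpha P (post M D' a))
      (fun β' ν' hc => alpha_self P _ (post_mono M C D' h a β' ν' hc)) β ν hp

end ADAaux

/-- Termination of abstract reachability up to equivalence:
for any finite predicate set `Π` and any enumeration `μ` of all finite event
sequences, there is a bound `k` such that every abstract post-image
`Post^Π_M(ι,u)` is equivalent to some `Post^Π_M(ι,μ(i))` with `i ≤ k`;
consequently the disjunction `⋁_{i=0}^{k} Post^Π_M(ι,μ(i))` is an invariant:
it is entailed by the concrete post-image `Post_M(ι,u)` for every `u`. -/
theorem abstract_reachability_terminates {Q E X D : Type}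
    (M : ADA Q E X D) (P : Set (ADA.Conf Q X D)) (hfin : P.Finite)
    (μ : ℕ → List E) (hμ : Function.Surjective μ) :
    ∃ k : ℕ,
      (∀ u : List E, ∃ i ≤ k, ∀ (β : Q → Prop) (ν : X → D),
        ADA.apostSeq M P (ADA.initConf M) u β ν ↔
        ADA.apostSeq M P (ADA.initConf M) (μ i) β ν) ∧
      (∀ (u : List E) (β : Q → Prop) (ν : X → D),
        ADA.postSeq M (ADA.initConf M) u β ν →
        ∃ i ≤ k, ADA.apostSeq M P (ADA.initConf M) (μ i) β ν) := by
  classical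
  haveI : Finite ↥P := hfin.to_subtype
  haveI : Finite (Set ↥P) := inferInstance
  haveI : Fintype (Set ↥P) := Fintype.ofFinite _
  haveI : Finite (Option (Set ↥P)) := inferInstance
  set ap : List E → ADA.Conf Q X D := fun u => ADA.apostSeq M P (ADA.initConf M) u with hap
  let cl : List E → Option (Set ↥P) := fun u =>
    if u = [] then none else some {π : ↥P | ∀ β ν, ap u β ν → π.1 β ν}
  have hcl : ∀ u v, cl u = cl v → ∀ β ν, ap u β ν ↔ ap v β ν := by
    intro u v h β ν
    by_cases hu : u = []
    · by_cases hv : v = []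
      · subst hu; subst hv; rfl
      · simp only [cl, if_pos hu, if_neg hv] at h; exact absurd h (by simp)
    · by_cases hv : v = []
      · simp only [cl, if_neg hu, if_pos hv] at h; exact absurd h (by simp)
      · simp only [cl, if_neg hu, if_neg hv, Option.some.injEq] at h
        refine ADAaux.apost_equiv M P u v hu hv ?_ β ν
        intro π hπ
        have := Set.ext_iff.mp h ⟨π, hπ⟩
        simpa using this
  have hrep : ∀ c ∈ Set.range cl, ∃ i, cl (μ i) = c := by
    rintro c ⟨u, rfl⟩
    obtain ⟨i, rfl⟩ := hμ u
    exact ⟨i, rfl⟩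
  obtain ⟨k, hk⟩ : ∃ k : ℕ, ∀ u : List E, ∃ i ≤ k, cl (μ i) = cl u := by
    choose f hf using hrep
    haveI : Finite ↥(Set.range cl) := (Set.toFinite (Set.range cl)).to_subtype
    let F : ↥(Set.range cl) → ℕ := fun c => f c.1 c.2
    obtain ⟨k, hk⟩ := (Set.toFinite (Set.range F)).bddAbove
    refine ⟨k, fun u => ?_⟩
    refine ⟨F ⟨cl u, Set.mem_range_self u⟩, hk (Set.mem_range_self _), hf _ _⟩
  refine ⟨k, ?_, ?_⟩
  · intro u
    obtain ⟨i, hik, hi⟩ := hk u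
    exact ⟨i, hik, fun β ν => hcl u (μ i) hi.symm β ν⟩
  · intro u β ν hpost
    have hs : ap u β ν :=
      ADAaux.sound M P u (ADA.initConf M) (ADA.initConf M) (fun _ _ h => h) β ν hpost
    obtain ⟨i, hik, hi⟩ := hk u
    exact ⟨i, hik, (hcl u (μ i) hi.symm β ν).1 hs⟩
end

section
/- Abstraction soundness: for any finite predicate set Π containing ⊥ and any alternating data automaton A, for every event sequence u ∈ Σ*, the concrete post-image entails the abstract post-image: Post_A(ι,u) ⊨ Post^Π_A(ι,u). Consequently, if Accept^Π_A(u) is unsatisfiable then Accept_A(u) is unsatisfiable. -/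
/-- Abstraction soundness: for any predicate set `Π`
containing `⊥`, the concrete post-image entails the abstract one:
`Post_M(ι,u) ⊨ Post^Π_M(ι,u)` for every event sequence `u`; consequently, if
the abstract acceptance formula `Accept^Π_M(u)` is unsatisfiable then so is
the concrete one `Accept_M(u)`. -/
theorem abstraction_sound {Q E X D : Type}
    (M : ADA Q E X D) (P : Set (ADA.Conf Q X D))
    (hbot : (fun (_ : Q → Prop) (_ : X → D) => False) ∈ P) :
    (∀ (u : List E) (β : Q → Prop) (ν : X → D),
      ADA.postSeq M (ADA.initConf M) u β ν →
      ADA.apostSeq M P (ADA.initConf M) u β ν) ∧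
    (∀ u : List E,
      (∀ (β : Q → Prop) (ν : X → D), ¬ ADA.AAcceptF M P u β ν) →
      (∀ (β : Q → Prop) (ν : X → D), ¬ ADA.AcceptF M u β ν)) := by
  have key : ∀ (u : List E) (C C' : ADA.Conf Q X D),
      (∀ β ν, C β ν → C' β ν) →
      ∀ β ν, ADA.postSeq M C u β ν → ADA.apostSeq M P C' u β ν := by
    intro u
    induction u with
    | nil => intro C C' h β ν hc; exact h β ν hc
    | cons a u ih =>
      intro C C' h β ν hc
      refine ih _ _ ?_ β ν hc
      intro β' ν' ⟨νp, hp⟩ π _ hπ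
      exact hπ β' ν' ⟨νp, h _ νp hp⟩
  refine ⟨fun u => key u _ _ (fun _ _ h => h), ?_⟩
  intro u habs β ν ⟨hpost, hfin⟩
  exact habs β ν ⟨key u _ _ (fun _ _ h => h) β ν hpost, hfin⟩
end

section
/- Antichain pruning soundness: for event sequences u, v ∈ Σ*, if Post_A(ι,u) ⊨ Post_A(ι,v), then for every suffix w ∈ Σ*, satisfiability of Accept_A(uw) implies satisfiability of Accept_A(vw). Hence when searching for a word witnessing non-emptiness, any sequence u subsumed by a stored sequence v can be discarded. -/
section
variable {Q E X D : Type}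
theorem post_mono (M : ADA Q E X D) {C₁ C₂ : ADA.Conf Q X D}
    (h : ∀ β ν, C₁ β ν → C₂ β ν) (a : E) :
    ∀ β ν, ADA.post M C₁ a β ν → ADA.post M C₂ a β ν := by
  intro β ν ⟨νp, hc⟩
  exact ⟨νp, h _ _ hc⟩

theorem postSeq_mono (M : ADA Q E X D) {C₁ C₂ : ADA.Conf Q X D}
    (h : ∀ β ν, C₁ β ν → C₂ β ν) (w : List E) :
    ∀ β ν, ADA.postSeq M C₁ w β ν → ADA.postSeq M C₂ w β ν := by
  induction w generalizing C₁ C₂ with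
  | nil => exact h
  | cons a w ih => exact ih (post_mono M h a)
end

/-- Antichain pruning soundness: if
`Post_M(ι,u) ⊨ Post_M(ι,v)`, then for every suffix `w`, satisfiability of
`Accept_M(u·w)` implies satisfiability of `Accept_M(v·w)`; hence a sequence
`u` subsumed by a stored sequence `v` may be discarded when searching for a
witness of non-emptiness. -/

theorem antichain_pruning_sound {Q E X D : Type} (M : ADA Q E X D)
    (u v : List E)
    (h : ∀ (β : Q → Prop) (ν : X → D),
      ADA.postSeq M (ADA.initConf M) u β ν →
      ADA.postSeq M (ADA.initConf M) v β ν) :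
    ∀ w : List E,
      (∃ (β : Q → Prop) (ν : X → D), ADA.AcceptF M (u ++ w) β ν) →
      (∃ (β : Q → Prop) (ν : X → D), ADA.AcceptF M (v ++ w) β ν) := by
  intro w ⟨β, ν, hpost, hfin⟩
  refine ⟨β, ν, ?_, hfin⟩
  have hu : ADA.postSeq M (ADA.initConf M) (u ++ w) β ν := hpost
  unfold ADA.postSeq at hu ⊢
  rw [List.foldl_append] at hu ⊢
  exact postSeq_mono M h w β ν hu
end
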